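/- The functions B, B', B'' : ℕ² → ℂ defined on odd coprime-to-2 pairs by B(a,b) = 𝟙_{2∤ab}·(b/a) (Kronecker symbol), B'(a,b) = 𝟙_{2∤ab}·(2b/a), B''(a,b) = 𝟙_{2∤ab}·(b/2a) are bi-characters with slopes at most 8; in particular, for each fixed odd a ≥ 1, the map n ↦ 𝟙_{2∤n}·(n/a) is a Dirichlet character of modulus 2a, and for each fixed odd b ≥ 1, the map n ↦ 𝟙_{2∤n}·(−1)^{((b−1)/2)((n−1)/2)}·(n/b) is a Dirichlet character of modulus 4b which agrees with n ↦ 𝟙_{2∤n}·(b/n) on positive integers by quadratic reciprocity. -/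

import Mathlib

/-- The Kronecker symbol `(n/2) = (2/n)`: `1` if `n ≡ ±1 (mod 8)`, `-1` if
`n ≡ ±3 (mod 8)`, and `0` if `n` is even. -/
def kron2 (n : ℕ) : ℤ :=
  if n % 8 = 1 ∨ n % 8 = 7 then 1 else if n % 8 = 3 ∨ n % 8 = 5 then -1 else 0

/-- `B(a,b) = 𝟙_{2∤ab} (b/a)` (Kronecker symbol). -/
def krB (a b : ℕ) : ℂ := if Odd (a * b) then ((jacobiSym b a : ℤ) : ℂ) else 0

/-- `B'(a,b) = 𝟙_{2∤ab} (2b/a)`. -/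
def krB' (a b : ℕ) : ℂ := if Odd (a * b) then ((jacobiSym (2 * b) a : ℤ) : ℂ) else 0

/-- `B''(a,b) = 𝟙_{2∤ab} (b/2a) = 𝟙_{2∤ab} (b/2)(b/a)`. -/
def krB'' (a b : ℕ) : ℂ :=
  if Odd (a * b) then ((kron2 b : ℂ) * ((jacobiSym b a : ℤ) : ℂ)) else 0

/-- A bi-character with slopes `c₁, c₂`: each row `B(a,−)` is a bounded multiple of a
Dirichlet character of modulus `c₁·a`, and each column `B(−,b)` is a bounded multiple
of a Dirichlet character of modulus `c₂·b`. -/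
def IsBiCharacter (B : ℕ → ℕ → ℂ) (c₁ c₂ : ℕ) : Prop :=
  (∀ a : ℕ, 1 ≤ a → ∃ (χ : DirichletCharacter ℂ (c₁ * a)) (M : ℂ), ‖M‖ ≤ 1 ∧
      ∀ n : ℕ, 1 ≤ n → B a n = M * χ (n : ZMod (c₁ * a))) ∧
  (∀ b : ℕ, 1 ≤ b → ∃ (ψ : DirichletCharacter ℂ (c₂ * b)) (N : ℂ), ‖N‖ ≤ 1 ∧
      ∀ n : ℕ, 1 ≤ n → B n b = N * ψ (n : ZMod (c₂ * b)))

/-!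
On odd arguments every row and column of `B`, `B'`, `B''` is, up to a constant factor of
modulus at most `1`, one of `n ↦ (n/a)`, `n ↦ (2/n)(n/a)` or `n ↦ (m/n)` for a fixed integer
`m`. Each is completely multiplicative on odd numbers, vanishes off the units, and is periodic:
`(n/a)` has period `a` in `n`, `(2/n)` period `8`, and `(m/n)` period `4|m|` on odd `n` (a
consequence of quadratic reciprocity). Restricted to odd `n`, such a function is a Dirichlet
character of modulus `2a`, `8a`, `4|m|` respectively. The last claim is quadratic reciprocity
itself.
-/

lemma exists_dirichletCharacter_of_periodic {N : ℕ} [NeZero N] (f : ℕ → ℂ) (h_one : f 1 = 1)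
    (h_mul : ∀ m n, f (m * n) = f m * f n) (h_per : Function.Periodic f N)
    (h_zero : ∀ n, ¬ n.Coprime N → f n = 0) :
    ∃ χ : DirichletCharacter ℂ N, ∀ n : ℕ, χ n = f n := by
  refine ⟨{ toFun := fun x => f x.val
            map_one' := ?_
            map_mul' := fun x y => ?_
            map_nonunit' := fun x hx => h_zero _ ?_ }, fun n => ?_⟩
  · simp only [ZMod.val_one_eq_one_mod, h_per.map_mod_nat, h_one]
  · simp only [ZMod.val_mul, h_per.map_mod_nat, h_mul]
  · rwa [← ZMod.isUnit_iff_coprime, ZMod.natCast_zmod_val]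
  · simp only [MulChar.coe_mk, MonoidHom.coe_mk, OneHom.coe_mk, ZMod.val_natCast,
      h_per.map_mod_nat]

lemma exists_dirichletCharacter_of_odd {N : ℕ} [NeZero N] (hN : Even N) (g : ℕ → ℂ)
    (h_one : g 1 = 1) (h_mul : ∀ m n, Odd m → Odd n → g (m * n) = g m * g n)
    (h_per : ∀ n, Odd n → g (n + N) = g n) (h_zero : ∀ n, Odd n → ¬ n.Coprime N → g n = 0) :
    ∃ χ : DirichletCharacter ℂ N, ∀ n : ℕ, χ n = if Odd n then g n else 0 := by
  refine exists_dirichletCharacter_of_periodic _ (by simp [h_one]) (fun m n => ?_)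
    (fun n => ?_) (fun n hn => ?_)
  · by_cases hm : Odd m <;> by_cases hn : Odd n <;> simp [Nat.odd_mul, hm, hn, h_mul]
  · have h_odd : Odd (n + N) ↔ Odd n := by simp [Nat.odd_add, hN]
    by_cases hn : Odd n <;> simp [h_odd, hn, h_per]
  · split_ifs with hodd
    exacts [h_zero n hodd hn, rfl]

lemma Odd.coprime_two_pow_mul {n m : ℕ} (hn : Odd n) (k : ℕ) (h : n.Coprime m) :
    n.Coprime (2 ^ k * m) :=
  Nat.Coprime.mul_right ((Nat.coprime_two_right.2 hn).pow_right k) h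

lemma Nat.sub_one_div_two_of_odd {n : ℕ} (hn : Odd n) : (n - 1) / 2 = n / 2 := by
  have := Nat.odd_iff.1 hn
  omega

lemma jacobiSym_natCast_eq_zero_of_not_coprime {m a : ℕ} [NeZero a] (h : ¬ m.Coprime a) :
    jacobiSym m a = 0 := by
  rwa [jacobiSym.eq_zero_iff_not_coprime, Int.gcd_natCast_natCast]

lemma exists_dirichletCharacter_jacobiSym_left {a : ℕ} (ha : Odd a) :
    ∃ χ : DirichletCharacter ℂ (2 * a), ∀ n : ℕ,
      χ n = if Odd n then ((jacobiSym n a : ℤ) : ℂ) else 0 := by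
  have : NeZero a := ⟨ha.pos.ne'⟩
  refine exists_dirichletCharacter_of_odd (even_two_mul a) _ (by simp [jacobiSym.one_left])
    (fun m n _ _ => ?_) (fun n _ => ?_) (fun n hn hcop => ?_)
  · simp [jacobiSym.mul_left]
  · rw [jacobiSym.mod_left' (a₂ := n) (by push_cast; simp)]
  · rw [jacobiSym_natCast_eq_zero_of_not_coprime fun h => hcop (hn.coprime_two_pow_mul 1 h),
      Int.cast_zero]

lemma exists_dirichletCharacter_jacobiSym_right {a : ℤ} (ha : a ≠ 0) {N : ℕ}
    (hN : N = 4 * a.natAbs) :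
    ∃ χ : DirichletCharacter ℂ N, ∀ n : ℕ,
      χ n = if Odd n then ((jacobiSym a n : ℤ) : ℂ) else 0 := by
  have : NeZero N := ⟨by simp [hN, ha]⟩
  have hN_even : Even N := hN ▸ (even_two_mul 2).mul_right _
  refine exists_dirichletCharacter_of_odd hN_even _
    (by simp [jacobiSym.one_right]) (fun m n hm hn => ?_) (fun n hn => ?_)
    (fun n hn hcop => ?_)
  · simp [jacobiSym.mul_right' a hm.pos.ne' hn.pos.ne']
  · rw [jacobiSym.mod_right a hn, jacobiSym.mod_right a (hn.add_even hN_even), ← hN,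
      Nat.add_mod_right]
  · have : NeZero n := ⟨hn.pos.ne'⟩
    have hcop' : ¬ n.Coprime a.natAbs := fun h => hcop (hN ▸ hn.coprime_two_pow_mul 2 h)
    rw [jacobiSym.eq_zero_iff_not_coprime.2 (by simpa [Int.gcd, Nat.coprime_comm] using hcop'),
      Int.cast_zero]

lemma kron2_eq_χ₈ (n : ℕ) : kron2 n = ZMod.χ₈ n := by
  rw [ZMod.χ₈_nat_eq_if_mod_eight, kron2]
  have h8 : n % 8 < 8 := Nat.mod_lt _ (by norm_num)
  have h2 : n % 2 = n % 8 % 2 := (Nat.mod_mod_of_dvd n (by norm_num)).symm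
  interval_cases h : n % 8 <;> simp_all

lemma exists_dirichletCharacter_kron2_mul_jacobiSym_left {a : ℕ} (ha : Odd a) :
    ∃ χ : DirichletCharacter ℂ (8 * a), ∀ n : ℕ,
      χ n = if Odd n then (kron2 n : ℂ) * ((jacobiSym n a : ℤ) : ℂ) else 0 := by
  have : NeZero a := ⟨ha.pos.ne'⟩
  refine exists_dirichletCharacter_of_odd ((by decide : Even 8).mul_right a) _
    (by simp [kron2, jacobiSym.one_left]) (fun m n _ _ => ?_) (fun n _ => ?_)
    (fun n hn hcop => ?_)
  · simp only [kron2_eq_χ₈, Nat.cast_mul, map_mul, jacobiSym.mul_left]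
    push_cast
    ring
  · have h_mod : (n + 8 * a) % 8 = n % 8 := by omega
    rw [jacobiSym.mod_left' (a₂ := n) (by push_cast; simp), kron2, kron2, h_mod]
  · rw [jacobiSym_natCast_eq_zero_of_not_coprime fun h => hcop (hn.coprime_two_pow_mul 3 h),
      Int.cast_zero, mul_zero]

lemma norm_jacobiSym_le_one (a : ℤ) (b : ℕ) : ‖((jacobiSym a b : ℤ) : ℂ)‖ ≤ 1 := by
  rcases jacobiSym.trichotomy a b with h | h | h <;> simp [h]

lemma norm_kron2_le_one (b : ℕ) : ‖((kron2 b : ℤ) : ℂ)‖ ≤ 1 := by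
  unfold kron2; split_ifs <;> simp

/-- Rows and columns of even index vanish: they are the zero multiple of the trivial character. -/
lemma isBiCharacter_of_odd {B : ℕ → ℕ → ℂ} {c₁ c₂ : ℕ}
    (hB : ∀ a b, ¬ Odd (a * b) → B a b = 0)
    (h_row : ∀ a, Odd a → ∃ (χ : DirichletCharacter ℂ (c₁ * a)) (M : ℂ), ‖M‖ ≤ 1 ∧
      ∀ n : ℕ, B a n = M * χ n)
    (h_col : ∀ b, Odd b → ∃ (ψ : DirichletCharacter ℂ (c₂ * b)) (N : ℂ), ‖N‖ ≤ 1 ∧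
      ∀ n : ℕ, B n b = N * ψ n) :
    IsBiCharacter B c₁ c₂ := by
  refine ⟨fun a _ => ?_, fun b _ => ?_⟩
  · by_cases ha : Odd a
    · obtain ⟨χ, M, hM, h⟩ := h_row a ha
      exact ⟨χ, M, hM, fun n _ => h n⟩
    · exact ⟨1, 0, by simp, fun n _ => by simp [hB, Nat.odd_mul, ha]⟩
  · by_cases hb : Odd b
    · obtain ⟨ψ, N, hN, h⟩ := h_col b hb
      exact ⟨ψ, N, hN, fun n _ => h n⟩
    · exact ⟨1, 0, by simp, fun n _ => by simp [hB, Nat.odd_mul, hb]⟩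

/-- `B`, `B'`, `B''` are bi-characters with slopes at most `8`; in particular for odd
`a ≥ 1` the map `n ↦ 𝟙_{2∤n}(n/a)` is a Dirichlet character of modulus `2a`, and for
odd `b ≥ 1` the map `n ↦ 𝟙_{2∤n}(−1)^{((b−1)/2)((n−1)/2)}(n/b)` is a Dirichlet
character of modulus `4b` agreeing with `n ↦ 𝟙_{2∤n}(b/n)` on positive integers. -/
theorem kronecker_bi_characters :
    (∃ c₁ c₂ : ℕ, 1 ≤ c₁ ∧ c₁ ≤ 8 ∧ 1 ≤ c₂ ∧ c₂ ≤ 8 ∧ IsBiCharacter krB c₁ c₂) ∧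
    (∃ c₁ c₂ : ℕ, 1 ≤ c₁ ∧ c₁ ≤ 8 ∧ 1 ≤ c₂ ∧ c₂ ≤ 8 ∧ IsBiCharacter krB' c₁ c₂) ∧
    (∃ c₁ c₂ : ℕ, 1 ≤ c₁ ∧ c₁ ≤ 8 ∧ 1 ≤ c₂ ∧ c₂ ≤ 8 ∧ IsBiCharacter krB'' c₁ c₂) ∧
    (∀ a : ℕ, Odd a → 1 ≤ a → ∃ χ : DirichletCharacter ℂ (2 * a),
        ∀ n : ℕ, χ (n : ZMod (2 * a)) =
          if Odd n then ((jacobiSym n a : ℤ) : ℂ) else 0) ∧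
    (∀ b : ℕ, Odd b → 1 ≤ b → ∃ ψ : DirichletCharacter ℂ (4 * b),
        (∀ n : ℕ, ψ (n : ZMod (4 * b)) =
          if Odd n then
            ((((-1 : ℤ) ^ (((b - 1) / 2) * ((n - 1) / 2)) * jacobiSym n b : ℤ)) : ℂ)
          else 0) ∧
        (∀ n : ℕ, 1 ≤ n → ψ (n : ZMod (4 * b)) =
          if Odd n then ((jacobiSym b n : ℤ) : ℂ) else 0)) := by
  have col : ∀ b : ℕ, Odd b → ∃ ψ : DirichletCharacter ℂ (4 * b), ∀ n : ℕ,
      ψ n = if Odd n then ((jacobiSym b n : ℤ) : ℂ) else 0 := fun b hb =>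
    exists_dirichletCharacter_jacobiSym_right (Nat.cast_ne_zero.2 hb.pos.ne') (by simp)
  refine ⟨⟨2, 4, by norm_num, by norm_num, by norm_num, by norm_num,
      isBiCharacter_of_odd (fun _ _ h => if_neg h) (fun a ha => ?_) (fun b hb => ?_)⟩,
    ⟨2, 8, by norm_num, by norm_num, by norm_num, by norm_num,
      isBiCharacter_of_odd (fun _ _ h => if_neg h) (fun a ha => ?_) (fun b hb => ?_)⟩,
    ⟨8, 4, by norm_num, by norm_num, by norm_num, by norm_num,
      isBiCharacter_of_odd (fun _ _ h => if_neg h) (fun a ha => ?_) (fun b hb => ?_)⟩,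
    fun a ha _ => exists_dirichletCharacter_jacobiSym_left ha, fun b hb _ => ?_⟩
  · obtain ⟨χ, hχ⟩ := exists_dirichletCharacter_jacobiSym_left ha
    exact ⟨χ, 1, by simp, fun n => by simp [hχ, krB, Nat.odd_mul, ha]⟩
  · obtain ⟨ψ, hψ⟩ := col b hb
    exact ⟨ψ, 1, by simp, fun n => by simp [hψ, krB, Nat.odd_mul, hb]⟩
  · obtain ⟨χ, hχ⟩ := exists_dirichletCharacter_jacobiSym_left ha
    exact ⟨χ, _, norm_jacobiSym_le_one 2 a, fun n => by
      simp [hχ, krB', Nat.odd_mul, ha, jacobiSym.mul_left]⟩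
  · obtain ⟨ψ, hψ⟩ := exists_dirichletCharacter_jacobiSym_right (a := 2 * b)
      (by simp [hb.pos.ne']) (N := 8 * b) (by simp [Int.natAbs_mul]; ring)
    exact ⟨ψ, 1, by simp, fun n => by simp [hψ, krB', Nat.odd_mul, hb]⟩
  · obtain ⟨χ, hχ⟩ := exists_dirichletCharacter_kron2_mul_jacobiSym_left ha
    exact ⟨χ, 1, by simp, fun n => by simp [hχ, krB'', Nat.odd_mul, ha]⟩
  · obtain ⟨ψ, hψ⟩ := col b hb
    exact ⟨ψ, _, norm_kron2_le_one b, fun n => by simp [hψ, krB'', Nat.odd_mul, hb]⟩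
  · obtain ⟨ψ, hψ⟩ := col b hb
    refine ⟨ψ, fun n => ?_, fun n _ => hψ n⟩
    rw [hψ]
    split_ifs with hn
    · rw [jacobiSym.quadratic_reciprocity hb hn, Nat.sub_one_div_two_of_odd hb,
        Nat.sub_one_div_two_of_odd hn]
    · rfl
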